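/- arXiv:1709.09331 — 6 statements merged into one kernel-verified Lean document; each statement's English description precedes it below -/
import Mathlib

section
/- Let P be a finite poset. Each order ideal toggle t_x : J(P) → J(P) is an involution (t_x ∘ t_x is the identity). Moreover, for x, y ∈ P, the toggles t_x and t_y commute (t_x ∘ t_y = t_y ∘ t_x) if and only if neither x covers y nor y covers x. -/
/-! Toggling `e` in `I` changes membership of `e` only; whether it does so depends on whether
`e` is maximal in `I` (when `e ∈ I`) or whether `Iio e ⊆ I` (when `e ∉ I`). Toggling `y ≠ x`
can change neither condition for `x` unless one of `x`, `y` covers the other, since any element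
strictly between them stands in for `y`. Conversely, for `x ⋖ y` the two orders of toggling
disagree on the ideal `Iio y`. -/

open scoped Classical

variable {P : Type*} [PartialOrder P]

abbrev OrderIdealSub (P : Type*) [PartialOrder P] : Type _ := {I : Set P // IsLowerSet I}

abbrev AntichainSub (P : Type*) [PartialOrder P] : Type _ := {A : Set P // IsAntichain (· ≤ ·) A}

noncomputable def togFun (e : P) (I : OrderIdealSub P) : OrderIdealSub P :=
  if _h : e ∈ I.1 then
    if h2 : IsLowerSet (I.1 \ {e}) then ⟨I.1 \ {e}, h2⟩ else I
  else
    if h2 : IsLowerSet (insert e I.1) then ⟨insert e I.1, h2⟩ else I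

noncomputable def atogFun (e : P) (A : AntichainSub P) : AntichainSub P :=
  if _h : e ∈ A.1 then ⟨A.1 \ {e}, A.2.subset Set.diff_subset⟩
  else if h2 : IsAntichain (· ≤ ·) (insert e A.1) then ⟨insert e A.1, h2⟩
  else A

def idealOf (A : AntichainSub P) : OrderIdealSub P :=
  ⟨{x | ∃ y ∈ A.1, x ≤ y}, fun _a _b hba ha => by
    obtain ⟨y, hy, h⟩ := ha
    exact ⟨y, hy, hba.trans h⟩⟩

def listComp {α : Type*} (fs : List (α → α)) : α → α := fs.foldr (· ∘ ·) id

theorem togFun_involutive (e : P) : Function.Involutive (togFun (P := P) e) := by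
  intro I
  unfold togFun
  by_cases h : e ∈ I.1
  · rw [dif_pos h]
    by_cases h2 : IsLowerSet (I.1 \ {e})
    · rw [dif_pos h2]
      have hne : e ∉ (⟨I.1 \ {e}, h2⟩ : OrderIdealSub P).1 := fun hc => hc.2 rfl
      rw [dif_neg hne]
      have hins : insert e (I.1 \ {e}) = I.1 := by
        rw [Set.insert_diff_singleton, Set.insert_eq_self.mpr h]
      have h3 : IsLowerSet (insert e ((⟨I.1 \ {e}, h2⟩ : OrderIdealSub P)).1) := by
        show IsLowerSet (insert e (I.1 \ {e})); rw [hins]; exact I.2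
      rw [dif_pos h3]
      exact Subtype.ext hins
    · rw [dif_neg h2, dif_pos h, dif_neg h2]
  · rw [dif_neg h]
    by_cases h2 : IsLowerSet (insert e I.1)
    · rw [dif_pos h2]
      have hme : e ∈ (⟨insert e I.1, h2⟩ : OrderIdealSub P).1 := Set.mem_insert e I.1
      rw [dif_pos hme]
      have hdel : (insert e I.1) \ {e} = I.1 := by
        rw [Set.insert_sdiff_self_of_notMem h]
      have h3 : IsLowerSet ((⟨insert e I.1, h2⟩ : OrderIdealSub P).1 \ {e}) := by
        show IsLowerSet ((insert e I.1) \ {e}); rw [hdel]; exact I.2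
      rw [dif_pos h3]
      exact Subtype.ext hdel
    · rw [dif_neg h2, dif_neg h, dif_neg h2]

theorem atogFun_involutive (e : P) : Function.Involutive (atogFun (P := P) e) := by
  intro A
  unfold atogFun
  by_cases h : e ∈ A.1
  · rw [dif_pos h]
    have hne : e ∉ (⟨A.1 \ {e}, A.2.subset Set.diff_subset⟩ : AntichainSub P).1 :=
      fun hc => hc.2 rfl
    rw [dif_neg hne]
    have hins : insert e (A.1 \ {e}) = A.1 := by
      rw [Set.insert_diff_singleton, Set.insert_eq_self.mpr h]
    have h2 : IsAntichain (· ≤ ·)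
        (insert e ((⟨A.1 \ {e}, A.2.subset Set.diff_subset⟩ : AntichainSub P)).1) := by
      show IsAntichain (· ≤ ·) (insert e (A.1 \ {e})); rw [hins]; exact A.2
    rw [dif_pos h2]
    exact Subtype.ext hins
  · rw [dif_neg h]
    by_cases h2 : IsAntichain (· ≤ ·) (insert e A.1)
    · rw [dif_pos h2]
      have hme : e ∈ (⟨insert e A.1, h2⟩ : AntichainSub P).1 := Set.mem_insert e A.1
      rw [dif_pos hme]
      have hdel : (insert e A.1) \ {e} = A.1 := by
        rw [Set.insert_sdiff_self_of_notMem h]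
      exact Subtype.ext hdel
    · rw [dif_neg h2, dif_neg h, dif_neg h2]

noncomputable def togPerm (e : P) : Equiv.Perm (OrderIdealSub P) :=
  (togFun_involutive e).toPerm _

noncomputable def atogPerm (e : P) : Equiv.Perm (AntichainSub P) :=
  (atogFun_involutive e).toPerm _

def IsLinExtListOn (S : Set P) (l : List P) : Prop :=
  l.Nodup ∧ (∀ x : P, x ∈ l ↔ x ∈ S) ∧
    ∀ i j : Fin l.length, l.get i < l.get j → (i : ℕ) < (j : ℕ)

noncomputable def RowJ (I : OrderIdealSub P) : OrderIdealSub P :=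
  ⟨{x | ∃ m, (m ∉ I.1 ∧ ∀ z, z ∉ I.1 → z ≤ m → z = m) ∧ x ≤ m}, fun _a _b hba ha => by
    obtain ⟨m, hm, h⟩ := ha
    exact ⟨m, hm, hba.trans h⟩⟩

noncomputable def RowA (A : AntichainSub P) : AntichainSub P :=
  ⟨{x | x ∉ (idealOf A).1 ∧ ∀ z, z ∉ (idealOf A).1 → z ≤ x → z = x}, by
    intro a ha b hb hne hab
    exact hne (hb.2 a ha.1 hab)⟩

open Set

theorem IsLowerSet.isLowerSet_diff_singleton_iff {S : Set P} (hS : IsLowerSet S) (x : P) :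
    IsLowerSet (S \ {x}) ↔ ∀ a ∈ S, ¬ x < a := by
  refine ⟨fun h a ha hxa => (h hxa.le ⟨ha, hxa.ne'⟩).2 rfl, fun h => hS.erase fun b hb hxb => ?_⟩
  by_contra hne
  exact h b hb (hxb.lt_of_ne fun hxb' => hne hxb'.symm)

theorem IsLowerSet.isLowerSet_insert_iff {S : Set P} (hS : IsLowerSet S) (x : P) :
    IsLowerSet (insert x S) ↔ Iio x ⊆ S := by
  refine ⟨fun h z hz => (h hz.le (mem_insert x S)).resolve_left hz.ne, fun h b a hba ha => ?_⟩
  rcases ha with rfl | ha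
  · rcases hba.eq_or_lt with rfl | hlt
    exacts [mem_insert _ _, mem_insert_of_mem _ (h hlt)]
  · exact mem_insert_of_mem _ (hS hba ha)

theorem mem_togFun_of_ne {a e : P} (h : a ≠ e) (I : OrderIdealSub P) :
    a ∈ (togFun e I).1 ↔ a ∈ I.1 := by
  unfold togFun
  split_ifs <;> simp [h]

theorem mem_togFun_self (e : P) (I : OrderIdealSub P) :
    e ∈ (togFun e I).1 ↔ if e ∈ I.1 then ∃ a ∈ I.1, e < a else Iio e ⊆ I.1 := by
  have hdiff := I.2.isLowerSet_diff_singleton_iff e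
  have hins := I.2.isLowerSet_insert_iff e
  unfold togFun
  split_ifs <;> simp_all

section AgreeOffPoint

variable {S T : Set P} {x y : P}

theorem IsLowerSet.exists_mem_gt_of_agree (hS : IsLowerSet S) (hxy : ¬ x ⋖ y)
    (hST : ∀ a ≠ y, a ∈ S ↔ a ∈ T) (h : ∃ a ∈ S, x < a) : ∃ a ∈ T, x < a := by
  obtain ⟨a, haS, hxa⟩ := h
  by_cases hay : a = y
  · subst hay
    obtain ⟨z, hxz, hza⟩ := (not_covBy_iff hxa).mp hxy
    exact ⟨z, (hST z hza.ne).mp (hS hza.le haS), hxz⟩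
  · exact ⟨a, (hST a hay).mp haS, hxa⟩

theorem IsLowerSet.Iio_subset_of_agree (hT : IsLowerSet T) (hyx : ¬ y ⋖ x)
    (hST : ∀ a ≠ y, a ∈ S ↔ a ∈ T) (h : Iio x ⊆ S) : Iio x ⊆ T := by
  intro z hzx
  by_cases hzy : z = y
  · subst hzy
    obtain ⟨w, hzw, hwx⟩ := (not_covBy_iff hzx).mp hyx
    exact hT hzw.le ((hST w hzw.ne').mp (h hwx))
  · exact (hST z hzy).mp (h hzx)

end AgreeOffPoint

theorem mem_togFun_togFun_self_iff {x y : P} (hne : x ≠ y) (hxy : ¬ x ⋖ y) (hyx : ¬ y ⋖ x)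
    (I : OrderIdealSub P) :
    x ∈ (togFun x (togFun y I)).1 ↔ x ∈ (togFun y (togFun x I)).1 := by
  have hagree : ∀ a ≠ y, a ∈ I.1 ↔ a ∈ (togFun y I).1 := fun a ha => (mem_togFun_of_ne ha I).symm
  have hgt : (∃ a ∈ (togFun y I).1, x < a) ↔ ∃ a ∈ I.1, x < a :=
    ⟨(togFun y I).2.exists_mem_gt_of_agree hxy fun a ha => (hagree a ha).symm,
      I.2.exists_mem_gt_of_agree hxy hagree⟩
  have hIio : Iio x ⊆ (togFun y I).1 ↔ Iio x ⊆ I.1 :=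
    ⟨I.2.Iio_subset_of_agree hyx fun a ha => (hagree a ha).symm,
      (togFun y I).2.Iio_subset_of_agree hyx hagree⟩
  rw [mem_togFun_of_ne hne, mem_togFun_self, mem_togFun_self, mem_togFun_of_ne hne, hgt, hIio]

theorem togFun_comm_of_not_covBy {x y : P} (hxy : ¬ x ⋖ y) (hyx : ¬ y ⋖ x) :
    togFun x ∘ togFun y = togFun y ∘ togFun x := by
  rcases eq_or_ne x y with rfl | hne
  · rfl
  funext I
  refine Subtype.ext (Set.ext fun a => ?_)
  simp only [Function.comp_apply]
  by_cases hax : a = x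
  · subst hax
    exact mem_togFun_togFun_self_iff hne hxy hyx I
  by_cases hay : a = y
  · subst hay
    exact (mem_togFun_togFun_self_iff hne.symm hyx hxy I).symm
  rw [mem_togFun_of_ne hax, mem_togFun_of_ne hay, mem_togFun_of_ne hay, mem_togFun_of_ne hax]

-- On `Iio y`, toggling `y` first makes `x` unremovable, toggling `x` first makes `y` unaddable.
theorem togFun_comp_ne_of_covBy {x y : P} (hcov : x ⋖ y) :
    togFun x ∘ togFun y ≠ togFun y ∘ togFun x := by
  intro hcomm
  let I : OrderIdealSub P := ⟨Iio y, isLowerSet_Iio y⟩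
  have hxI : x ∈ I.1 := hcov.lt
  have hyI : y ∉ I.1 := lt_irrefl y
  have hy : y ∈ (togFun y I).1 := by simp [mem_togFun_self, hyI, I]
  have hx_left : x ∈ (togFun x (togFun y I)).1 := by
    rw [mem_togFun_self, if_pos ((mem_togFun_of_ne hcov.ne I).mpr hxI)]
    exact ⟨y, hy, hcov.lt⟩
  have hx_right : x ∉ (togFun y (togFun x I)).1 := by
    rw [mem_togFun_of_ne hcov.ne, mem_togFun_self, if_pos hxI]
    rintro ⟨a, hay, hxa⟩
    exact hcov.2 hxa hay
  exact hx_right (congrArg Subtype.val (congrFun hcomm I) ▸ hx_left)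

theorem order_ideal_toggle_involutive_and_commute_general
    (P : Type*) [PartialOrder P] :
    (∀ x : P, togFun x ∘ togFun x = id) ∧
    (∀ x y : P, togFun x ∘ togFun y = togFun y ∘ togFun x ↔ ¬ x ⋖ y ∧ ¬ y ⋖ x) :=
  ⟨fun x => (togFun_involutive x).comp_self, fun _ _ =>
    ⟨fun hcomm => ⟨fun hcov => togFun_comp_ne_of_covBy hcov hcomm,
      fun hcov => togFun_comp_ne_of_covBy hcov hcomm.symm⟩,
    fun ⟨hxy, hyx⟩ => togFun_comm_of_not_covBy hxy hyx⟩⟩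

/-- Each order ideal toggle is an involution, and two order ideal toggles commute
if and only if neither element covers the other. -/
theorem order_ideal_toggle_involutive_and_commute
    (P : Type*) [PartialOrder P] [Fintype P] :
    (∀ x : P, togFun x ∘ togFun x = id) ∧
    (∀ x y : P, togFun x ∘ togFun y = togFun y ∘ togFun x ↔ ¬ x ⋖ y ∧ ¬ y ⋖ x) :=
  order_ideal_toggle_involutive_and_commute_general P
end

section
/- Let P be a finite poset. Each antichain toggle τ_x : A(P) → A(P) is an involution. Moreover, for x, y ∈ P, the toggles τ_x and τ_y commute (τ_x ∘ τ_y = τ_y ∘ τ_x) if and only if x = y or x and y are incomparable. -/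
open scoped Classical

variable {P : Type*} [PartialOrder P]

/-!
The toggle `τ_e` sends `A` to `A ∆ {e}` when that is an antichain and fixes `A` otherwise. If
`x` and `y` are incomparable, `A ∆ {x} ∆ {y}` is an antichain exactly when `A ∆ {x}` and
`A ∆ {y}` both are, so `τ_x ∘ τ_y` and `τ_y ∘ τ_x` agree on every `A`. If `x < y`, then
`τ_y (τ_x ∅) = {x}` while `τ_x (τ_y ∅) = {y}`.
-/

open scoped symmDiff

section

variable {α : Type*} {r : α → α → Prop} {s : Set α} {a b x y : α}

theorem Set.mem_symmDiff_singleton_of_ne (h : a ≠ b) : a ∈ s ∆ {b} ↔ a ∈ s := by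
  simp [Set.mem_symmDiff, h]

theorem IsAntichain.symmDiff_singleton_of_symmDiff_symmDiff (hs : IsAntichain r s)
    (hne : x ≠ y) (hxy : ¬ r x y) (hyx : ¬ r y x) (h : IsAntichain r (s ∆ {x} ∆ {y})) :
    IsAntichain r (s ∆ {x}) := by
  intro a ha b hb hab
  by_cases hay : a = y
  · subst hay
    by_cases hbx : b = x
    · exact hbx ▸ hyx
    · exact hs ((Set.mem_symmDiff_singleton_of_ne hne.symm).1 ha)
        ((Set.mem_symmDiff_singleton_of_ne hbx).1 hb) hab
  by_cases hby : b = y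
  · subst hby
    by_cases hax : a = x
    · exact hax ▸ hxy
    · exact hs ((Set.mem_symmDiff_singleton_of_ne hax).1 ha)
        ((Set.mem_symmDiff_singleton_of_ne hne.symm).1 hb) hab
  exact h ((Set.mem_symmDiff_singleton_of_ne hay).2 ha)
    ((Set.mem_symmDiff_singleton_of_ne hby).2 hb) hab

theorem IsAntichain.symmDiff_symmDiff_singleton_iff (hs : IsAntichain r s) (hne : x ≠ y)
    (hxy : ¬ r x y) (hyx : ¬ r y x) :
    IsAntichain r (s ∆ {x} ∆ {y}) ↔ IsAntichain r (s ∆ {x}) ∧ IsAntichain r (s ∆ {y}) := by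
  refine ⟨fun h => ⟨hs.symmDiff_singleton_of_symmDiff_symmDiff hne hxy hyx h,
    hs.symmDiff_singleton_of_symmDiff_symmDiff hne.symm hyx hxy (symmDiff_right_comm s _ _ ▸ h)⟩,
    fun ⟨hx, hy⟩ a ha b hb hab => ?_⟩
  by_cases hy' : a ≠ y ∧ b ≠ y
  · exact hx ((Set.mem_symmDiff_singleton_of_ne hy'.1).1 ha)
      ((Set.mem_symmDiff_singleton_of_ne hy'.2).1 hb) hab
  by_cases hx' : a ≠ x ∧ b ≠ x
  · rw [symmDiff_right_comm] at ha hb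
    exact hy ((Set.mem_symmDiff_singleton_of_ne hx'.1).1 ha)
      ((Set.mem_symmDiff_singleton_of_ne hx'.2).1 hb) hab
  obtain ⟨rfl, rfl⟩ | ⟨rfl, rfl⟩ : (a = x ∧ b = y) ∨ (a = y ∧ b = x) := by grind
  exacts [hxy, hyx]

end

theorem coe_atogFun (e : P) (A : AntichainSub P) :
    (atogFun e A).1 = if IsAntichain (· ≤ ·) (A.1 ∆ {e}) then A.1 ∆ {e} else A.1 := by
  unfold atogFun
  by_cases he : e ∈ A.1
  · have hdiff : A.1 ∆ {e} = A.1 \ {e} := symmDiff_of_ge (Set.singleton_subset_iff.2 he)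
    rw [dif_pos he, hdiff, if_pos (A.2.subset Set.sdiff_subset)]
  · have hins : A.1 ∆ {e} = insert e A.1 :=
      (Set.disjoint_singleton_right.2 he).symmDiff_eq_sup.trans Set.union_singleton
    simp only [dif_neg he, hins]
    split_ifs <;> rfl

theorem atogFun_comm_of_incomparable {x y : P} (hxy : ¬ x ≤ y) (hyx : ¬ y ≤ x)
    (A : AntichainSub P) : atogFun x (atogFun y A) = atogFun y (atogFun x A) := by
  have hboth := A.2.symmDiff_symmDiff_singleton_iff (fun h => hxy h.le) hxy hyx
  apply Subtype.ext
  simp only [coe_atogFun]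
  split_ifs <;> simp_all [symmDiff_right_comm]

theorem coe_atogFun_atogFun_empty {a b : P} (hab : a ≠ b)
    (h : ¬ IsAntichain (· ≤ ·) {a, b}) :
    (atogFun b (atogFun a ⟨∅, IsAntichain.empty⟩)).1 = {a} := by
  have hsingle : (∅ : Set P) ∆ {a} = {a} := bot_symmDiff _
  have hpair : ({a} : Set P) ∆ {b} = {a, b} :=
    (Set.disjoint_singleton.2 hab).symmDiff_eq_sup.trans Set.singleton_union
  rw [coe_atogFun, coe_atogFun, hsingle, if_pos IsAntichain.singleton, hpair, if_neg h]

theorem atogFun_comp_ne_of_not_isAntichain {x y : P} (hne : x ≠ y)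
    (h : ¬ IsAntichain (· ≤ ·) {x, y}) : atogFun x ∘ atogFun y ≠ atogFun y ∘ atogFun x := by
  intro hcomm
  have hempty := congrArg Subtype.val (congrFun hcomm ⟨∅, IsAntichain.empty⟩)
  rw [Function.comp_apply, Function.comp_apply,
    coe_atogFun_atogFun_empty hne.symm (Set.pair_comm x y ▸ h), coe_atogFun_atogFun_empty hne h,
    Set.singleton_eq_singleton_iff] at hempty
  exact hne hempty.symm

theorem antichain_toggle_involutive_and_commute_general
    (P : Type*) [PartialOrder P] :
    (∀ x : P, atogFun x ∘ atogFun x = id) ∧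
    (∀ x y : P, atogFun x ∘ atogFun y = atogFun y ∘ atogFun x ↔
      x = y ∨ (¬ x ≤ y ∧ ¬ y ≤ x)) := by
  refine ⟨fun x => (atogFun_involutive x).comp_self, fun x y => ⟨fun hcomm => ?_, ?_⟩⟩
  · refine or_iff_not_imp_left.2 fun hne => ?_
    by_contra hcomparable
    exact atogFun_comp_ne_of_not_isAntichain hne
      (fun hanti => hcomparable (Set.pairwise_pair.1 hanti hne)) hcomm
  · rintro (rfl | ⟨hxy, hyx⟩)
    · rfl
    · exact funext (atogFun_comm_of_incomparable hxy hyx)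

/-- Each antichain toggle is an involution, and two antichain toggles commute
if and only if the two elements are equal or incomparable. -/
theorem antichain_toggle_involutive_and_commute
    (P : Type*) [PartialOrder P] [Fintype P] :
    (∀ x : P, atogFun x ∘ atogFun x = id) ∧
    (∀ x y : P, atogFun x ∘ atogFun y = atogFun y ∘ atogFun x ↔
      x = y ∨ (¬ x ≤ y ∧ ¬ y ≤ x)) :=
  antichain_toggle_involutive_and_commute_general P
end

section
/- Let P be a finite poset, e ∈ P, and let e_1, …, e_k be the elements covered by e. Define t_e^* := τ_{e_1} ∘ ⋯ ∘ τ_{e_k} ∘ τ_e ∘ τ_{e_1} ∘ ⋯ ∘ τ_{e_k} (this is well-defined since the τ_{e_i} pairwise commute). Then for every order ideal I ∈ J(P) with A the antichain of maximal elements of I, the antichain of maximal elements of t_e(I) equals t_e^*(A). Equivalently, I ∘ t_e^* = t_e ∘ I as maps A(P) → J(P), where I : A(P) → J(P) is the bijection sending an antichain to the order ideal it generates. -/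
open scoped Classical

variable {P : Type*} [PartialOrder P]

/-! Write `C` for the set of elements covered by `e`. Since `C` is an antichain, toggling its
elements in any order sends an antichain `A` to `π A = (A \ C) ∪ {c ∈ C | c ∥ A}`, and `π` is an
involution, so `t_e^* = π ∘ τ_e ∘ π`. Four cases:
* `e ∈ A`: `π A = A`, `τ_e` removes `e`, and the second `π` brings back exactly the covers of `e`
  not lying below another element of `A`, which generate `I(A) \ {e}`;
* `e < a ∈ A`: `π A = A`, which `τ_e` fixes, so `t_e^* A = π (π A) = A`, and `t_e` fixes `I(A)`;
* `e ∉ I(A)` and `C ⊆ I(A)`: `π A = A \ C`, to which `τ_e` adds `e`, generating `insert e I(A)`;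
* some `c ∈ C` lies outside `I(A)`: then `π A` has an element below `c < e`, so `τ_e` fixes
  `π A`, and `t_e` fixes `I(A)` as `insert e I(A)` is not a lower set.
-/

section Toggles

variable (e : P)

lemma atogFun_val_of_mem {A : AntichainSub P} (h : e ∈ A.1) :
    (atogFun e A).1 = A.1 \ {e} := by
  rw [atogFun, dif_pos h]

lemma atogFun_val_of_notMem_of_isAntichain {A : AntichainSub P} (h : e ∉ A.1)
    (h' : IsAntichain (· ≤ ·) (insert e A.1)) : (atogFun e A).1 = insert e A.1 := by
  rw [atogFun, dif_neg h, dif_pos h']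

lemma atogFun_of_notMem_of_not_isAntichain {A : AntichainSub P} (h : e ∉ A.1)
    (h' : ¬IsAntichain (· ≤ ·) (insert e A.1)) : atogFun e A = A := by
  rw [atogFun, dif_neg h, dif_neg h']

lemma togFun_val_of_mem_of_isLowerSet {I : OrderIdealSub P} (h : e ∈ I.1)
    (h' : IsLowerSet (I.1 \ {e})) : (togFun e I).1 = I.1 \ {e} := by
  rw [togFun, dif_pos h, dif_pos h']

lemma togFun_of_mem_of_not_isLowerSet {I : OrderIdealSub P} (h : e ∈ I.1)
    (h' : ¬IsLowerSet (I.1 \ {e})) : togFun e I = I := by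
  rw [togFun, dif_pos h, dif_neg h']

lemma togFun_val_of_notMem_of_isLowerSet {I : OrderIdealSub P} (h : e ∉ I.1)
    (h' : IsLowerSet (insert e I.1)) : (togFun e I).1 = insert e I.1 := by
  rw [togFun, dif_neg h, dif_pos h']

lemma togFun_of_notMem_of_not_isLowerSet {I : OrderIdealSub P} (h : e ∉ I.1)
    (h' : ¬IsLowerSet (insert e I.1)) : togFun e I = I := by
  rw [togFun, dif_neg h, dif_neg h']

lemma idealOf_val (A : AntichainSub P) : (idealOf A).1 = lowerClosure A.1 := rfl

end Toggles

-- For an antichain `C`, toggling the elements of `C` one by one, in any order, has this effect.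
def togglePass (C A : Set P) : Set P :=
  (A \ C) ∪ {c ∈ C | ∀ a ∈ A, IncompRel (· ≤ ·) c a}

section TogglePass

variable {A C S : Set P} {c : P}

lemma atogFun_val_of_val_eq_togglePass (hc : c ∉ S)
    (hS : IsAntichain (· ≤ ·) (insert c S)) {B : AntichainSub P} (hB : B.1 = togglePass S A) :
    (atogFun c B).1 = togglePass (insert c S) A := by
  have hcS : ∀ d ∈ S, IncompRel (· ≤ ·) c d := fun d hd =>
    (isAntichain_insert.1 hS).2 hd (fun h => hc (h ▸ hd))
  by_cases hcA : c ∈ A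
  · have hinc : ¬∀ a ∈ A, IncompRel (· ≤ ·) c a := fun h => (h c hcA).1 le_rfl
    rw [atogFun_val_of_mem c (by rw [hB]; exact Or.inl ⟨hcA, hc⟩), hB]
    ext x
    rcases eq_or_ne x c with rfl | hx
    · simp [togglePass, hc, hinc]
    · simp [togglePass, hx]
  have hcB : c ∉ B.1 := by rw [hB]; simp [togglePass, hc, hcA]
  by_cases hinc : ∀ a ∈ A, IncompRel (· ≤ ·) c a
  · have hincB : ∀ b ∈ B.1, IncompRel (· ≤ ·) c b := by
      rw [hB]
      rintro b (hb | hb)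
      exacts [hinc b hb.1, hcS b hb.1]
    have hanti : IsAntichain (· ≤ ·) (insert c B.1) :=
      B.2.insert (fun b hb _ => (hincB b hb).2) (fun b hb _ => (hincB b hb).1)
    rw [atogFun_val_of_notMem_of_isAntichain c hcB hanti, hB]
    ext x
    rcases eq_or_ne x c with rfl | hx
    · simpa [togglePass, hc, hcA] using hinc
    · simp [togglePass, hx]
  · obtain ⟨a, ha, hca⟩ : ∃ a ∈ A, ¬IncompRel (· ≤ ·) c a := by simpa using hinc
    have haB : a ∈ B.1 := by
      rw [hB]
      exact Or.inl ⟨ha, fun haS => hca (hcS a haS)⟩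
    have hnot : ¬IsAntichain (· ≤ ·) (insert c B.1) := fun h =>
      hca ((isAntichain_insert.1 h).2 haB fun hca => hcA (hca ▸ ha))
    rw [atogFun_of_notMem_of_not_isAntichain c hcB hnot, hB]
    ext x
    rcases eq_or_ne x c with rfl | hx
    · simp [togglePass, hc, hcA, hinc]
    · simp [togglePass, hx]

lemma listComp_map_atogFun_val {l : List P} (hnd : l.Nodup)
    (hl : IsAntichain (· ≤ ·) {x | x ∈ l}) (A : AntichainSub P) :
    (listComp (l.map atogFun) A).1 = togglePass {x | x ∈ l} A.1 := by
  induction l with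
  | nil => simp [listComp, togglePass]
  | cons c l ih =>
    rw [List.nodup_cons] at hnd
    have hcons : {x | x ∈ c :: l} = insert c {x | x ∈ l} := Set.ext fun _ => List.mem_cons
    rw [hcons] at hl ⊢
    exact atogFun_val_of_val_eq_togglePass (S := {x | x ∈ l}) hnd.1 hl
      (ih hnd.2 (hl.subset (Set.subset_insert c _)))

lemma IsAntichain.incompRel {s : Set P} (hs : IsAntichain (· ≤ ·) s) {a b : P} (ha : a ∈ s)
    (hb : b ∈ s) (hab : a ≠ b) : IncompRel (· ≤ ·) a b :=
  ⟨hs ha hb hab, hs hb ha hab.symm⟩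

lemma togglePass_togglePass (hC : IsAntichain (· ≤ ·) C) (hA : IsAntichain (· ≤ ·) A) :
    togglePass C (togglePass C A) = A := by
  ext x
  by_cases hxC : x ∈ C
  · suffices (∀ b ∈ togglePass C A, IncompRel (· ≤ ·) x b) ↔ x ∈ A by
      simpa [togglePass, hxC] using this
    constructor
    · intro hx
      by_contra hxA
      have hxT : x ∈ togglePass C A := Or.inr ⟨hxC, fun a ha => by
        by_cases haC : a ∈ C
        · exact hC.incompRel hxC haC fun h => hxA (h ▸ ha)
        · exact hx a (Or.inl ⟨ha, haC⟩)⟩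
      exact (hx x hxT).1 le_rfl
    · rintro hxA b (hb | hb)
      · exact hA.incompRel hxA hb.1 fun h => hb.2 (h ▸ hxC)
      · exact hC.incompRel hxC hb.1 fun h => (hb.2 x hxA).1 (h ▸ le_rfl)
  · simp [togglePass, hxC]

lemma togglePass_of_subset_lowerClosure (h : C ⊆ lowerClosure A) : togglePass C A = A \ C :=
  Set.union_eq_left.2 fun c hc => by
    obtain ⟨a, ha, hca⟩ := h hc.1
    exact absurd hca (hc.2 a ha).1

lemma togglePass_eq_self (hA : IsAntichain (· ≤ ·) A) (h : ∀ c ∈ C, ∃ a ∈ A, c < a) :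
    togglePass C A = A := by
  rw [togglePass_of_subset_lowerClosure fun c hc => (h c hc).imp fun _ ha => ⟨ha.1, ha.2.le⟩]
  refine sdiff_eq_left.2 (Set.disjoint_left.2 fun c hcA hcC => ?_)
  obtain ⟨a, ha, hca⟩ := h c hcC
  exact hA hcA ha hca.ne hca.le

lemma exists_mem_togglePass_le (hC : IsAntichain (· ≤ ·) C) (hc : c ∈ C)
    (hcA : c ∉ lowerClosure A) : ∃ b ∈ togglePass C A, b ≤ c := by
  by_cases hbelow : ∃ a ∈ A, a ≤ c
  · obtain ⟨a, ha, hac⟩ := hbelow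
    refine ⟨a, Or.inl ⟨ha, fun haC => hcA ⟨a, ha, ?_⟩⟩, hac⟩
    by_contra hca
    exact hC haC hc (fun h => hca (h ▸ le_rfl)) hac
  · push Not at hbelow
    exact ⟨c, Or.inr ⟨hc, fun a ha => ⟨fun hca => hcA ⟨a, ha, hca⟩, hbelow a ha⟩⟩, le_rfl⟩

end TogglePass

lemma isAntichain_setOf_covBy (e : P) : IsAntichain (· ≤ ·) {x | x ⋖ e} :=
  fun _ ha _ hb hab hle => ha.2 (lt_of_le_of_ne hle hab) hb.1

section Covers

variable [IsStronglyCoatomic P] {A : Set P} {e : P}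

lemma lowerClosure_togglePass_sdiff_singleton (hA : IsAntichain (· ≤ ·) A) (he : e ∈ A) :
    (lowerClosure (togglePass {x | x ⋖ e} (A \ {e})) : Set P) = (lowerClosure A : Set P) \ {e} := by
  have hsub : A \ {e} ⊆ togglePass {x | x ⋖ e} (A \ {e}) := fun a ha =>
    Or.inl ⟨ha, fun hae => hA ha.1 he ha.2 hae.1.le⟩
  ext x
  constructor
  · rintro ⟨y, ⟨hy, -⟩ | ⟨hye, -⟩, hxy⟩
    · refine ⟨⟨y, hy.1, hxy⟩, fun hxe => hA he hy.1 (Ne.symm hy.2) ?_⟩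
      rwa [← hxe]
    · exact ⟨⟨e, he, hxy.trans hye.1.le⟩, (hxy.trans_lt hye.1).ne⟩
  · rintro ⟨⟨y, hy, hxy⟩, hxe⟩
    rcases eq_or_ne e y with rfl | hye
    · obtain ⟨c, hxc, hce⟩ := exists_le_covBy_of_lt (lt_of_le_of_ne hxy hxe)
      by_cases hinc : ∀ a ∈ A \ {e}, IncompRel (· ≤ ·) c a
      · exact ⟨c, Or.inr ⟨hce, hinc⟩, hxc⟩
      · push Not at hinc
        obtain ⟨a, ha, hca⟩ := hinc
        have hca : c ≤ a := by_contra fun hca' =>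
          hca ⟨hca', fun hac => hA ha.1 hy ha.2 (hac.trans hce.1.le)⟩
        exact ⟨a, hsub ha, hxc.trans hca⟩
    · exact ⟨y, hsub ⟨hy, hye.symm⟩, hxy⟩

lemma lowerClosure_insert_sdiff_setOf_covBy (hcov : {x | x ⋖ e} ⊆ lowerClosure A) :
    (lowerClosure (insert e (A \ {x | x ⋖ e})) : Set P) = insert e (lowerClosure A : Set P) := by
  ext x
  constructor
  · rintro ⟨y, rfl | hy, hxy⟩
    · rcases hxy.eq_or_lt with rfl | hxy
      · exact Set.mem_insert x _
      · obtain ⟨c, hxc, hce⟩ := exists_le_covBy_of_lt hxy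
        obtain ⟨a, ha, hca⟩ := hcov hce
        exact Or.inr ⟨a, ha, hxc.trans hca⟩
    · exact Or.inr ⟨y, hy.1, hxy⟩
  · rintro (rfl | ⟨y, hy, hxy⟩)
    · exact ⟨x, Set.mem_insert x _, le_rfl⟩
    · by_cases hye : y ⋖ e
      · exact ⟨e, Set.mem_insert e _, hxy.trans hye.1.le⟩
      · exact ⟨y, Or.inr ⟨hy, hye⟩, hxy⟩

lemma IsAntichain.insert_sdiff_setOf_covBy (hA : IsAntichain (· ≤ ·) A) (he : e ∉ lowerClosure A)
    (hcov : {x | x ⋖ e} ⊆ lowerClosure A) :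
    IsAntichain (· ≤ ·) (insert e (A \ {x | x ⋖ e})) := by
  refine (hA.subset Set.sdiff_subset).insert (fun b hb hbe hble => ?_)
    fun b hb _ heb => he ⟨b, hb.1, heb⟩
  obtain ⟨c, hbc, hce⟩ := exists_le_covBy_of_lt (lt_of_le_of_ne hble hbe.symm)
  obtain ⟨a, ha, hca⟩ := hcov hce
  have hba : b = a := by_contra fun hba => hA hb.1 ha hba (hbc.trans hca)
  exact hb.2 (le_antisymm hbc (hba ▸ hca) ▸ hce)

end Covers

section TStar

variable {e : P} {pass : AntichainSub P → AntichainSub P}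

lemma pass_pass (hpass : ∀ B, (pass B).1 = togglePass {x | x ⋖ e} B.1) (A : AntichainSub P) :
    pass (pass A) = A :=
  Subtype.ext <| by rw [hpass, hpass]; exact togglePass_togglePass (isAntichain_setOf_covBy e) A.2

lemma idealOf_tStar_of_mem [IsStronglyCoatomic P]
    (hpass : ∀ B, (pass B).1 = togglePass {x | x ⋖ e} B.1) {A : AntichainSub P} (he : e ∈ A.1) :
    idealOf (pass (atogFun e (pass A))) = togFun e (idealOf A) := by
  have hA : (pass A).1 = A.1 := by
    rw [hpass]; exact togglePass_eq_self A.2 fun c hc => ⟨e, he, hc.1⟩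
  have hval : (idealOf (pass (atogFun e (pass A)))).1 = (idealOf A).1 \ {e} := by
    rw [idealOf_val, hpass, atogFun_val_of_mem e (hA ▸ he), hA]
    exact lowerClosure_togglePass_sdiff_singleton A.2 he
  refine Subtype.ext ?_
  rw [hval, togFun_val_of_mem_of_isLowerSet e (I := idealOf A) ⟨e, he, le_rfl⟩
    (hval ▸ (idealOf _).2)]

lemma idealOf_tStar_of_mem_idealOf_of_notMem
    (hpass : ∀ B, (pass B).1 = togglePass {x | x ⋖ e} B.1) {A : AntichainSub P} (he : e ∉ A.1)
    (heI : e ∈ (idealOf A).1) : idealOf (pass (atogFun e (pass A))) = togFun e (idealOf A) := by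
  obtain ⟨a, ha, hea⟩ := heI
  have hea' : e < a := lt_of_le_of_ne hea fun h => he (h ▸ ha)
  have hA : (pass A).1 = A.1 := by
    rw [hpass]; exact togglePass_eq_self A.2 fun c hc => ⟨a, ha, hc.1.trans hea'⟩
  rw [atogFun_of_notMem_of_not_isAntichain e (hA ▸ he) ?_, pass_pass hpass,
    togFun_of_mem_of_not_isLowerSet e (I := idealOf A) ⟨a, ha, hea⟩ ?_]
  · exact fun h => (h hea ⟨⟨a, ha, le_rfl⟩, hea'.ne'⟩).2 rfl
  · rw [hA]
    exact fun h => ((isAntichain_insert.1 h).2 ha hea'.ne).1 hea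

lemma idealOf_tStar_of_setOf_covBy_subset [IsStronglyCoatomic P]
    (hpass : ∀ B, (pass B).1 = togglePass {x | x ⋖ e} B.1) {A : AntichainSub P}
    (heI : e ∉ (idealOf A).1) (hcov : {x | x ⋖ e} ⊆ lowerClosure A.1) :
    idealOf (pass (atogFun e (pass A))) = togFun e (idealOf A) := by
  have hA : (pass A).1 = A.1 \ {x | x ⋖ e} := by
    rw [hpass]; exact togglePass_of_subset_lowerClosure hcov
  have he : e ∉ (pass A).1 := by rw [hA]; exact fun h => heI ⟨e, h.1, le_rfl⟩
  have hanti := A.2.insert_sdiff_setOf_covBy heI hcov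
  have hval : (idealOf (pass (atogFun e (pass A)))).1 = insert e (idealOf A).1 := by
    rw [idealOf_val, hpass, atogFun_val_of_notMem_of_isAntichain e he (hA ▸ hanti), hA,
      togglePass_eq_self hanti fun c hc => ⟨e, Set.mem_insert e _, hc.1⟩]
    exact lowerClosure_insert_sdiff_setOf_covBy hcov
  refine Subtype.ext ?_
  rw [hval, togFun_val_of_notMem_of_isLowerSet e heI (hval ▸ (idealOf _).2)]

lemma idealOf_tStar_of_covBy_notMem (hpass : ∀ B, (pass B).1 = togglePass {x | x ⋖ e} B.1)
    {A : AntichainSub P} (heI : e ∉ (idealOf A).1) {c : P} (hc : c ⋖ e)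
    (hcA : c ∉ (idealOf A).1) : idealOf (pass (atogFun e (pass A))) = togFun e (idealOf A) := by
  obtain ⟨b, hb, hbc⟩ := exists_mem_togglePass_le (isAntichain_setOf_covBy e) hc hcA
  have he : e ∉ (pass A).1 := by
    rw [hpass]
    rintro (h | h)
    exacts [heI ⟨e, h.1, le_rfl⟩, lt_irrefl e (show e ⋖ e from h.1).1]
  rw [atogFun_of_notMem_of_not_isAntichain e he ?_, pass_pass hpass,
    togFun_of_notMem_of_not_isLowerSet e heI ?_]
  · exact fun h => hcA ((h hc.1.le (Set.mem_insert e _)).resolve_left hc.1.ne)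
  · exact fun h => ((isAntichain_insert.1 h).2 (hpass A ▸ hb) (hbc.trans_lt hc.1).ne').2
      (hbc.trans hc.1.le)

end TStar

/-- For `e ∈ P` with covered elements `e_1, …, e_k`, and
`t_e^* = τ_{e_1} ⋯ τ_{e_k} τ_e τ_{e_1} ⋯ τ_{e_k}`, the order ideal generated by `t_e^*(A)`
is `t_e` applied to the order ideal generated by `A`; i.e. `I ∘ t_e^* = t_e ∘ I`. -/
theorem ideal_of_tStar_eq_toggle_ideal
    (P : Type*) [PartialOrder P] [Fintype P] (e : P) (l : List P)
    (hnd : l.Nodup) (hmem : ∀ x : P, x ∈ l ↔ x ⋖ e) (A : AntichainSub P) :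
    idealOf ((listComp (l.map atogFun) ∘ atogFun e ∘ listComp (l.map atogFun)) A)
      = togFun e (idealOf A) := by
  have hl : {x | x ∈ l} = {x | x ⋖ e} := Set.ext hmem
  have hpass : ∀ B, (listComp (l.map atogFun) B).1 = togglePass {x | x ⋖ e} B.1 := fun B => by
    rw [listComp_map_atogFun_val hnd (hl ▸ isAntichain_setOf_covBy e), hl]
  by_cases he : e ∈ A.1
  · exact idealOf_tStar_of_mem hpass he
  by_cases heI : e ∈ (idealOf A).1
  · exact idealOf_tStar_of_mem_idealOf_of_notMem hpass he heI
  by_cases hcov : {x | x ⋖ e} ⊆ lowerClosure A.1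
  · exact idealOf_tStar_of_setOf_covBy_subset hpass heI hcov
  · obtain ⟨c, hc, hcA⟩ := Set.not_subset.1 hcov
    exact idealOf_tStar_of_covBy_notMem hpass heI hc hcA
end

section
/- Let P be a finite poset. There is a group isomorphism from the antichain toggle group Tog_A(P) (the subgroup of permutations of A(P) generated by {τ_e | e ∈ P}) to the order ideal toggle group Tog_J(P) (the subgroup of permutations of J(P) generated by {t_e | e ∈ P}) sending τ_e to τ_e^* for each e ∈ P; its inverse sends t_e to t_e^*. Concretely, the map w ↦ I ∘ w ∘ I^{-1}, where I : A(P) → J(P) is the bijection sending an antichain to the order ideal it generates, restricts to a group isomorphism Tog_A(P) → Tog_J(P). -/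
open scoped Classical

variable {P : Type*} [PartialOrder P]

/-!
Conjugation by the bijection `I : A(P) ≃ J(P)` is an isomorphism `Perm A(P) ≃* Perm J(P)`, so it
suffices to show that it maps `Tog_A(P)` onto `Tog_J(P)`. The heart of the matter is the identity
`I ∘ t_e^* = t_e ∘ I`. The covers of `e` are pairwise incomparable, so toggling them one after
another toggles each of them relative to the original antichain; with this, a case analysis on
the position of `e` relative to the ideal `I(A)` gives the identity. Hence every `t_e` lies in
the image. Conversely `τ_e = g t_e^* g`, where `g` is the product of the toggles at the covers of
`e`, and well-founded induction on `e` puts the conjugate of `τ_e` into `Tog_J(P)`.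
-/

lemma prod_map_mem_closure {G α : Type*} [Group G] (f : α → G) (l : List α) :
    (l.map f).prod ∈ Subgroup.closure (Set.range f) :=
  list_prod_mem (List.forall_mem_map.mpr fun a _ => Subgroup.subset_closure ⟨a, rfl⟩)

lemma isAntichain_insert_congr {x : P} {S s t : Set P} (hS : IsAntichain (· ≤ ·) (insert x S))
    (hs : IsAntichain (· ≤ ·) s) (ht : IsAntichain (· ≤ ·) t) (hst : ∀ y ∉ S, y ∈ s ↔ y ∈ t) :
    IsAntichain (· ≤ ·) (insert x s) ↔ IsAntichain (· ≤ ·) (insert x t) := by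
  simp only [isAntichain_insert, hs, ht, true_and]
  constructor <;> intro h b hb hxb <;> by_cases hbS : b ∈ S
  · exact (isAntichain_insert.mp hS).2 hbS hxb
  · exact h ((hst b hbS).mpr hb) hxb
  · exact (isAntichain_insert.mp hS).2 hbS hxb
  · exact h ((hst b hbS).mp hb) hxb

lemma IsLowerSet.insert_of_forall_lt {s : Set P} (hs : IsLowerSet s) {a : P}
    (ha : ∀ b < a, b ∈ s) : IsLowerSet (insert a s) := by
  rintro u v hvu (rfl | hu)
  · exact hvu.eq_or_lt.imp id (ha v)
  · exact Or.inr (hs hvu hu)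

lemma isLowerSet_idealOf_sdiff_singleton {e : P} {A : AntichainSub P} (he : e ∈ A.1) :
    IsLowerSet ((idealOf A).1 \ {e}) :=
  (idealOf A).2.erase fun _ ⟨_, ha, hba⟩ heb =>
    le_antisymm (A.2.eq he ha (heb.trans hba) ▸ hba) heb

lemma mem_atogFun {e x : P} {A : AntichainSub P} :
    x ∈ (atogFun e A).1 ↔
      (x ≠ e ∧ x ∈ A.1) ∨ (x = e ∧ e ∉ A.1 ∧ IsAntichain (· ≤ ·) (insert e A.1)) := by
  unfold atogFun
  split_ifs with he hanti
  · simp only [Set.mem_sdiff, Set.mem_singleton_iff]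
    tauto
  · by_cases hx : x = e <;> simp [hx, he, hanti]
  · by_cases hx : x = e <;> simp [hx, he, hanti]

lemma atogPerm_apply (e : P) (A : AntichainSub P) : atogPerm e A = atogFun e A := rfl

lemma togPerm_apply (e : P) (I : OrderIdealSub P) : togPerm e I = togFun e I := rfl

lemma atogFun_of_not_isAntichain {e : P} {A : AntichainSub P}
    (h : ¬ IsAntichain (· ≤ ·) (insert e A.1)) : atogFun e A = A := by
  have he : e ∉ A.1 := fun he => h (by rw [Set.insert_eq_of_mem he]; exact A.2)
  simp [atogFun, he, h]

lemma coe_atogFun_of_isAntichain {e : P} {A : AntichainSub P} (he : e ∉ A.1)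
    (h : IsAntichain (· ≤ ·) (insert e A.1)) : (atogFun e A).1 = insert e A.1 := by
  simp [atogFun, he, h]

lemma mem_prod_atogPerm_apply {l : List P} (hl : l.Nodup)
    (hanti : IsAntichain (· ≤ ·) {x | x ∈ l}) (A : AntichainSub P) (x : P) :
    x ∈ ((l.map atogPerm).prod A).1 ↔
      (x ∉ l ∧ x ∈ A.1) ∨ (x ∈ l ∧ x ∉ A.1 ∧ IsAntichain (· ≤ ·) (insert x A.1)) := by
  induction l generalizing x with
  | nil => simp
  | cons c t ih =>
    obtain ⟨hct, ht⟩ := List.nodup_cons.mp hl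
    have ih := ih ht (hanti.subset fun y hy => List.mem_cons_of_mem c hy)
    set B := (t.map atogPerm).prod A
    have hct' : IsAntichain (· ≤ ·) (insert c {y | y ∈ t}) :=
      hanti.subset (Set.insert_subset List.mem_cons_self fun y hy => List.mem_cons_of_mem c hy)
    have hinsert : IsAntichain (· ≤ ·) (insert c B.1) ↔ IsAntichain (· ≤ ·) (insert c A.1) :=
      isAntichain_insert_congr hct' B.2 A.2 fun y hy => by simp_all
    have hcB : c ∈ B.1 ↔ c ∈ A.1 := by simp [ih, hct]
    show x ∈ (atogFun c B).1 ↔ _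
    by_cases hxc : x = c
    · subst hxc
      rw [mem_atogFun, hinsert, hcB]
      by_cases hxA : x ∈ A.1 <;> simp [hxA]
    · rw [mem_atogFun, ih x]
      simp [hxc]

lemma prod_atogPerm_involutive {l : List P} (hl : l.Nodup)
    (hanti : IsAntichain (· ≤ ·) {x | x ∈ l}) :
    Function.Involutive (l.map atogPerm).prod := by
  intro A
  set B := (l.map atogPerm).prod A
  refine Subtype.ext (Set.ext fun x => ?_)
  rw [mem_prod_atogPerm_apply hl hanti]
  by_cases hxl : x ∈ l
  · have hxl' : IsAntichain (· ≤ ·) (insert x {y | y ∈ l}) := by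
      rwa [Set.insert_eq_of_mem (show x ∈ {y | y ∈ l} from hxl)]
    have hinsert : IsAntichain (· ≤ ·) (insert x B.1) ↔ IsAntichain (· ≤ ·) (insert x A.1) :=
      isAntichain_insert_congr hxl' B.2 A.2 fun y hy =>
        (mem_prod_atogPerm_apply hl hanti A y).trans (by simp_all)
    rw [hinsert, mem_prod_atogPerm_apply hl hanti]
    by_cases hxA : x ∈ A.1
    · simp [hxl, hxA, Set.insert_eq_of_mem hxA, A.2]
    · simp [hxl, hxA]
  · simp only [hxl, not_false_eq_true, true_and, false_and, or_false]
    exact (mem_prod_atogPerm_apply hl hanti A x).trans (by simp [hxl])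

noncomputable def maxOf (I : OrderIdealSub P) : AntichainSub P :=
  ⟨{m | Maximal (· ∈ I.1) m}, fun _ ha _ hb hne hab => hne (le_antisymm hab (ha.2 hb.1 hab))⟩

lemma maxOf_idealOf (A : AntichainSub P) : maxOf (idealOf A) = A := by
  refine Subtype.ext (Set.ext fun m => ⟨fun ⟨⟨a, ha, hma⟩, hmax⟩ => ?_, fun hm => ?_⟩)
  · rwa [le_antisymm hma (hmax ⟨a, ha, le_rfl⟩ hma)]
  · refine ⟨⟨m, hm, le_rfl⟩, fun y ⟨b, hb, hyb⟩ hmy => ?_⟩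
    rwa [A.2.eq hm hb (hmy.trans hyb)]

lemma idealOf_maxOf [Finite P] (I : OrderIdealSub P) : idealOf (maxOf I) = I := by
  refine Subtype.ext (Set.ext fun x => ⟨fun ⟨m, hm, hxm⟩ => I.2 hxm hm.1, fun hx => ?_⟩)
  obtain ⟨m, hxm, hm⟩ := Finite.exists_le_maximal (p := (· ∈ I.1)) hx
  exact ⟨m, hm, hxm⟩

noncomputable def idealOfEquiv (P : Type*) [PartialOrder P] [Finite P] :
    AntichainSub P ≃ OrderIdealSub P where
  toFun := idealOf
  invFun := maxOf
  left_inv := maxOf_idealOf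
  right_inv := idealOf_maxOf

lemma idealOf_injective [Finite P] : Function.Injective (idealOf (P := P)) :=
  (idealOfEquiv P).injective

section Covers

variable [Fintype P] {e x : P} {A : AntichainSub P}

noncomputable def coversList (e : P) : List P := (Finset.univ.filter (· ⋖ e)).toList

lemma mem_coversList : x ∈ coversList e ↔ x ⋖ e := by simp [coversList]

lemma nodup_coversList (e : P) : (coversList e).Nodup := Finset.nodup_toList _

lemma isAntichain_coversList (e : P) : IsAntichain (· ≤ ·) {x | x ∈ coversList e} :=
  fun _ ha _ hb hne hab =>
    (mem_coversList.mp ha).2 (hab.lt_of_ne hne) (mem_coversList.mp hb).1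

noncomputable def atogCovers (e : P) : Equiv.Perm (AntichainSub P) :=
  ((coversList e).map atogPerm).prod

lemma atogCovers_involutive (e : P) : Function.Involutive (atogCovers e) :=
  prod_atogPerm_involutive (nodup_coversList e) (isAntichain_coversList e)

lemma mem_atogCovers_of_not_covBy (hx : ¬ x ⋖ e) : x ∈ (atogCovers e A).1 ↔ x ∈ A.1 := by
  rw [atogCovers, mem_prod_atogPerm_apply (nodup_coversList e) (isAntichain_coversList e)]
  simp [mem_coversList, hx]

lemma mem_atogCovers_of_covBy (hx : x ⋖ e) :
    x ∈ (atogCovers e A).1 ↔ x ∉ A.1 ∧ IsAntichain (· ≤ ·) (insert x A.1) := by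
  rw [atogCovers, mem_prod_atogPerm_apply (nodup_coversList e) (isAntichain_coversList e)]
  simp [mem_coversList, hx]

/-- The element `t_e^*` of the antichain toggle group. -/
noncomputable def atogStar (e : P) : Equiv.Perm (AntichainSub P) :=
  atogCovers e * atogPerm e * atogCovers e

lemma atogStar_involutive (e : P) : Function.Involutive (atogStar e) := fun A => by
  simp only [atogStar, Equiv.Perm.mul_apply, atogCovers_involutive e _,
    (atogFun_involutive e) _, atogPerm_apply]

lemma atogCovers_apply_of_mem_idealOf (he : e ∈ (idealOf A).1) : atogCovers e A = A := by
  obtain ⟨a, ha, hea⟩ := he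
  refine Subtype.ext (Set.ext fun x => ?_)
  by_cases hx : x ⋖ e
  · have hxa : x < a := hx.lt.trans_le hea
    rw [mem_atogCovers_of_covBy hx]
    refine ⟨fun ⟨_, hanti⟩ => ?_, fun hxA => ?_⟩
    · exact absurd hxa.le (hanti (Set.mem_insert x _) (Set.mem_insert_of_mem x ha) hxa.ne)
    · exact absurd hxa.le (A.2 hxA ha hxa.ne)
  · exact mem_atogCovers_of_not_covBy hx

end Covers

section Star

variable [Fintype P] {e : P} {A : AntichainSub P}

lemma atogStar_apply_of_mem_idealOf_of_not_mem (he : e ∈ (idealOf A).1) (heA : e ∉ A.1) :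
    atogStar e A = A := by
  obtain ⟨a, ha, hea⟩ := he
  have hτ : atogPerm e A = A := atogFun_of_not_isAntichain fun hanti =>
    hanti (Set.mem_insert e _) (Set.mem_insert_of_mem e ha) (fun h => heA (h ▸ ha)) hea
  simp only [atogStar, Equiv.Perm.mul_apply, atogCovers_apply_of_mem_idealOf ⟨a, ha, hea⟩, hτ]

/-- A cover `c ≥ x` of `e` lies outside `I(A)`; once the covers are toggled, `c` or an element of
`A` below `c` blocks the toggle at `e`. -/
lemma atogStar_apply_of_lt_not_mem_idealOf {x : P} (hxe : x < e) (hx : x ∉ (idealOf A).1) :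
    atogStar e A = A := by
  obtain ⟨c, hxc, hce⟩ := exists_le_covBy_of_lt hxe
  have hc : c ∉ (idealOf A).1 := fun h => hx ((idealOf A).2 hxc h)
  set B := atogCovers e A
  have hblocked : ¬ IsAntichain (· ≤ ·) (insert e B.1) := by
    intro hanti
    by_cases hcB : c ∈ B.1
    · exact hanti (Set.mem_insert_of_mem e hcB) (Set.mem_insert e _) hce.lt.ne hce.lt.le
    · have hcA : c ∉ A.1 := fun h => hc ⟨c, h, le_rfl⟩
      rw [mem_atogCovers_of_covBy hce] at hcB
      simp only [hcA, not_false_eq_true, true_and, isAntichain_insert, A.2] at hcB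
      push Not at hcB
      obtain ⟨a, ha, hca, hac⟩ := hcB
      have hac : a < c := (hac fun h => hc ⟨a, ha, h⟩).lt_of_ne hca.symm
      have haB : a ∈ B.1 := (mem_atogCovers_of_not_covBy fun h => h.2 hac hce.lt).mpr ha
      exact hanti (Set.mem_insert_of_mem e haB) (Set.mem_insert e _)
        (hac.trans hce.lt).ne (hac.trans hce.lt).le
  show atogCovers e (atogFun e B) = A
  rw [atogFun_of_not_isAntichain hblocked, atogCovers_involutive]

lemma coe_atogStar_of_forall_lt_mem_idealOf (he : e ∉ (idealOf A).1)
    (hlt : ∀ x < e, x ∈ (idealOf A).1) : (atogStar e A).1 = insert e {a ∈ A.1 | ¬ a ⋖ e} := by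
  have hB : (atogCovers e A).1 = {a ∈ A.1 | ¬ a ⋖ e} := by
    ext x
    by_cases hx : x ⋖ e
    · obtain ⟨a, ha, hxa⟩ := hlt x hx.lt
      simp only [mem_atogCovers_of_covBy hx, hx, not_true_eq_false, and_false, iff_false,
        Set.mem_ofPred_eq]
      exact fun ⟨hxA, hanti⟩ => hanti (Set.mem_insert x _) (Set.mem_insert_of_mem x ha)
        (fun h => hxA (h ▸ ha)) hxa
    · simp [mem_atogCovers_of_not_covBy hx, hx]
  have hanti : IsAntichain (· ≤ ·) (insert e {a ∈ A.1 | ¬ a ⋖ e}) := by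
    refine isAntichain_insert.mpr ⟨A.2.subset (Set.sep_subset _ _), fun b ⟨hbA, hb⟩ heb =>
      ⟨fun h => he ⟨b, hbA, h⟩, fun hbe => hb ⟨(hbe.lt_of_ne heb.symm), fun y hby hye => ?_⟩⟩⟩
    obtain ⟨a, ha, hya⟩ := hlt y hye
    exact (hby.trans_le hya).ne (A.2.eq hbA ha (hby.le.trans hya))
  have hC : (atogPerm e (atogCovers e A)).1 = insert e {a ∈ A.1 | ¬ a ⋖ e} := by
    have heB : e ∉ (atogCovers e A).1 := by
      rw [hB]
      exact fun h => he ⟨e, h.1, le_rfl⟩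
    rw [atogPerm_apply, coe_atogFun_of_isAntichain heB (hB ▸ hanti), hB]
  ext x
  rw [atogStar, Equiv.Perm.mul_apply, Equiv.Perm.mul_apply, ← hC]
  by_cases hx : x ⋖ e
  · rw [mem_atogCovers_of_covBy hx, hC]
    simp only [Set.mem_insert_iff, hx.lt.ne, Set.mem_ofPred_eq, hx, not_true_eq_false, and_false,
      or_false, not_false_eq_true, true_and, iff_false]
    exact fun hanti => hanti (Set.mem_insert x _) (Set.mem_insert_of_mem x (Set.mem_insert e _))
      hx.lt.ne hx.lt.le
  · exact mem_atogCovers_of_not_covBy hx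

lemma coe_idealOf_atogStar_of_forall_lt_mem_idealOf (he : e ∉ (idealOf A).1)
    (hlt : ∀ x < e, x ∈ (idealOf A).1) :
    (idealOf (atogStar e A)).1 = insert e (idealOf A).1 := by
  ext x
  show (∃ b ∈ (atogStar e A).1, x ≤ b) ↔ _
  rw [coe_atogStar_of_forall_lt_mem_idealOf he hlt]
  constructor
  · rintro ⟨b, rfl | ⟨hbA, -⟩, hxb⟩
    · exact hxb.eq_or_lt.imp id (hlt x)
    · exact Or.inr ⟨b, hbA, hxb⟩
  · rintro (rfl | ⟨a, ha, hxa⟩)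
    · exact ⟨x, Set.mem_insert x _, le_rfl⟩
    · by_cases hae : a ⋖ e
      · exact ⟨e, Set.mem_insert e _, hxa.trans hae.lt.le⟩
      · exact ⟨a, Set.mem_insert_of_mem e ⟨ha, hae⟩, hxa⟩

/-- Removing a maximal element `e` is inverse to the previous case, applied to the antichain of
maximal elements of `I(A) \ {e}`. -/
lemma coe_idealOf_atogStar_of_mem (he : e ∈ A.1) :
    (idealOf (atogStar e A)).1 = (idealOf A).1 \ {e} := by
  have hlow := isLowerSet_idealOf_sdiff_singleton he
  set A₀ := maxOf ⟨_, hlow⟩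
  have hA₀ : idealOf A₀ = ⟨_, hlow⟩ := idealOf_maxOf _
  have heA₀ : e ∉ (idealOf A₀).1 := by
    rw [hA₀]
    exact fun h => h.2 rfl
  have hltA₀ : ∀ x < e, x ∈ (idealOf A₀).1 := fun x hx => by
    rw [hA₀]
    exact ⟨⟨e, he, hx.le⟩, hx.ne⟩
  have hstar : atogStar e A₀ = A := idealOf_injective <| Subtype.ext <| by
    rw [coe_idealOf_atogStar_of_forall_lt_mem_idealOf heA₀ hltA₀, hA₀, Set.insert_sdiff_singleton,
      Set.insert_eq_of_mem (show e ∈ (idealOf A).1 from ⟨e, he, le_rfl⟩)]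
  have hA : atogStar e A = A₀ := by
    rw [← hstar]
    exact atogStar_involutive e A₀
  rw [hA, hA₀]

end Star

section Groups

variable [Fintype P]

lemma idealOf_atogStar (e : P) (A : AntichainSub P) :
    idealOf (atogStar e A) = togFun e (idealOf A) := by
  unfold togFun
  split_ifs with he hlow hlow
  · obtain ⟨a, ha, hea⟩ := he
    have hae : a = e := by
      by_contra hae
      exact (hlow hea ⟨⟨a, ha, le_rfl⟩, hae⟩).2 rfl
    exact Subtype.ext (coe_idealOf_atogStar_of_mem (hae ▸ ha))
  · exact congrArg idealOf (atogStar_apply_of_mem_idealOf_of_not_mem he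
      fun heA => hlow (isLowerSet_idealOf_sdiff_singleton heA))
  · refine Subtype.ext (coe_idealOf_atogStar_of_forall_lt_mem_idealOf he fun x hx => ?_)
    exact (hlow hx.le (Set.mem_insert e _)).resolve_left hx.ne
  · have : ∃ x < e, x ∉ (idealOf A).1 := by
      by_contra! h
      exact hlow ((idealOf A).2.insert_of_forall_lt h)
    obtain ⟨x, hxe, hx⟩ := this
    exact congrArg idealOf (atogStar_apply_of_lt_not_mem_idealOf hxe hx)

lemma atogStar_mem_closure (e : P) :
    atogStar e ∈ Subgroup.closure (Set.range (atogPerm (P := P))) :=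
  mul_mem (mul_mem (prod_map_mem_closure _ _) (Subgroup.subset_closure ⟨e, rfl⟩))
    (prod_map_mem_closure _ _)

lemma permCongrHom_atogStar (e : P) : (idealOfEquiv P).permCongrHom (atogStar e) = togPerm e :=
  Equiv.ext fun I => by
    simpa [Equiv.permCongrHom_coe, Equiv.permCongr_apply, idealOfEquiv, idealOf_maxOf,
      togPerm_apply] using idealOf_atogStar e (maxOf I)

/-- Since `atogCovers e` is an involution, `τ_e = atogCovers e * t_e^* * atogCovers e`, and
`atogCovers e` only toggles elements below `e`. -/
lemma permCongrHom_atogPerm_mem_closure (e : P) :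
    (idealOfEquiv P).permCongrHom (atogPerm e)
      ∈ Subgroup.closure (Set.range (togPerm (P := P))) := by
  induction e using WellFoundedLT.induction with
  | _ e ih =>
    have hcovers : (idealOfEquiv P).permCongrHom (atogCovers e)
        ∈ Subgroup.closure (Set.range (togPerm (P := P))) := by
      rw [atogCovers, map_list_prod, List.map_map]
      exact list_prod_mem (List.forall_mem_map.mpr fun c hc => ih c (mem_coversList.mp hc).lt)
    have hsq : atogCovers e * atogCovers e = 1 :=
      Equiv.ext (atogCovers_involutive e)
    have hτ : atogPerm e = atogCovers e * atogStar e * atogCovers e := by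
      simp only [atogStar, ← mul_assoc, hsq, one_mul]
      rw [mul_assoc, hsq, mul_one]
    rw [hτ, map_mul, map_mul, permCongrHom_atogStar]
    exact mul_mem (mul_mem hcovers (Subgroup.subset_closure ⟨e, rfl⟩)) hcovers

lemma map_permCongrHom_closure_atogPerm :
    (Subgroup.closure (Set.range (atogPerm (P := P)))).map
        ((idealOfEquiv P).permCongrHom : Equiv.Perm (AntichainSub P) →* _)
      = Subgroup.closure (Set.range (togPerm (P := P))) := by
  refine le_antisymm ?_ ?_
  · rw [Subgroup.map_le_iff_le_comap, Subgroup.closure_le]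
    rintro _ ⟨e, rfl⟩
    exact permCongrHom_atogPerm_mem_closure e
  · rw [Subgroup.closure_le]
    rintro _ ⟨e, rfl⟩
    exact ⟨atogStar e, atogStar_mem_closure e, permCongrHom_atogStar e⟩

end Groups

/-- The map `w ↦ I ∘ w ∘ I⁻¹`, where `I : A(P) → J(P)` sends an antichain to the order
ideal it generates, restricts to a group isomorphism from the antichain toggle group
`Tog_A(P)` to the order ideal toggle group `Tog_J(P)`. -/
theorem toggle_groups_isomorphic
    (P : Type*) [PartialOrder P] [Fintype P] :
    ∃ φ : Subgroup.closure (Set.range (atogPerm (P := P))) ≃*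
        Subgroup.closure (Set.range (togPerm (P := P))),
      ∀ (w : Subgroup.closure (Set.range (atogPerm (P := P)))) (A : AntichainSub P),
        idealOf ((w : Equiv.Perm (AntichainSub P)) A)
          = (φ w : Equiv.Perm (OrderIdealSub P)) (idealOf A) := by
  refine ⟨((idealOfEquiv P).permCongrHom.subgroupMap _).trans
    (MulEquiv.subgroupCongr map_permCongrHom_closure_atogPerm), fun w A => ?_⟩
  show idealOf ((w : Equiv.Perm _) A) = (idealOfEquiv P).permCongrHom w (idealOf A)
  simp [Equiv.permCongrHom_coe, Equiv.permCongr_apply, idealOfEquiv, maxOf_idealOf]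
end

section
/- Let P be a finite poset with n elements and let (x_1, x_2, …, x_n) be any linear extension of P. Then antichain rowmotion satisfies Row_A = τ_{x_n} ∘ ⋯ ∘ τ_{x_2} ∘ τ_{x_1} (compositions applied right to left, so τ_{x_1} is applied first). -/
open scoped Classical

variable {P : Type*} [PartialOrder P]

/-!
Once the elements of a lower set `S` have been toggled (in linear-extension order), the
antichain is `partialRow A S = (RowA A ∩ S) ∪ (A \ S)`. Toggling a next element `e`, all of
whose strict lower bounds lie in `S`, keeps this form with `S ∪ {e}`: `e` is removed if `e ∈ A`
(then `e ∉ RowA A`), added if `e ∈ RowA A`, and otherwise the insertion is blocked, either by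
an element of `A` above `e` (if `e` is in the ideal of `A`) or by an element of `RowA A`
strictly below `e`.
-/

theorem listComp_append {α : Type*} (fs gs : List (α → α)) :
    listComp (fs ++ gs) = listComp fs ∘ listComp gs := by
  induction fs with
  | nil => rfl
  | cons f fs ih => exact congrArg (f ∘ ·) ih

theorem listComp_reverse_map_cons {α β : Type*} (f : β → α → α) (b : β) (l : List β) :
    listComp ((b :: l).reverse.map f) = listComp (l.reverse.map f) ∘ f b := by
  simp only [List.reverse_cons, List.map_append, listComp_append]
  rfl

theorem atogFun_val_of_mem_s7 {e : P} {B : AntichainSub P} (he : e ∈ B.1) :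
    (atogFun e B).1 = B.1 \ {e} := by
  simp only [atogFun, dif_pos he]

theorem atogFun_val_of_isAntichain_insert {e : P} {B : AntichainSub P} (he : e ∉ B.1)
    (hB : IsAntichain (· ≤ ·) (insert e B.1)) : (atogFun e B).1 = insert e B.1 := by
  simp only [atogFun, dif_neg he, dif_pos hB]

theorem atogFun_of_not_isAntichain_insert {e : P} {B : AntichainSub P}
    (hB : ¬IsAntichain (· ≤ ·) (insert e B.1)) : atogFun e B = B := by
  have he : e ∉ B.1 := fun he => hB (by rw [Set.insert_eq_of_mem he]; exact B.2)
  simp only [atogFun, dif_neg he, dif_neg hB]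

theorem IsLowerSet.insert_of_forall_lt_mem {S : Set P} (hS : IsLowerSet S) {e : P}
    (hlt : ∀ a < e, a ∈ S) : IsLowerSet (insert e S) := by
  rintro a b hba (rfl | ha)
  · rcases hba.eq_or_lt with rfl | hlt'
    · exact Set.mem_insert _ _
    · exact Set.mem_insert_of_mem _ (hlt b hlt')
  · exact Set.mem_insert_of_mem _ (hS hba ha)

theorem mem_RowA_of_minimal {A : AntichainSub P} {m : P}
    (hm : Minimal (· ∉ (idealOf A).1) m) : m ∈ (RowA A).1 :=
  ⟨hm.1, fun _ hz hzm => le_antisymm hzm (hm.2 hz hzm)⟩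

theorem exists_mem_RowA_le [WellFoundedLT P] {A : AntichainSub P} {e : P}
    (he : e ∉ (idealOf A).1) : ∃ m ∈ (RowA A).1, m ≤ e := by
  obtain ⟨m, hme, hm⟩ := exists_minimal_le_of_wellFoundedLT (· ∉ (idealOf A).1) e he
  exact ⟨m, mem_RowA_of_minimal hm, hme⟩

def partialRow (A : AntichainSub P) (S : Set P) : Set P := ((RowA A).1 ∩ S) ∪ (A.1 \ S)

theorem partialRow_empty (A : AntichainSub P) : partialRow A ∅ = A.1 := by
  simp [partialRow]

theorem partialRow_univ (A : AntichainSub P) : partialRow A Set.univ = (RowA A).1 := by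
  simp [partialRow]

theorem isAntichain_partialRow (A : AntichainSub P) {S : Set P} (hS : IsLowerSet S) :
    IsAntichain (· ≤ ·) (partialRow A S) := by
  rintro a (⟨haR, haS⟩ | ⟨haA, haS⟩) b (⟨hbR, hbS⟩ | ⟨hbA, hbS⟩) hne hab
  · exact (RowA A).2 haR hbR hne hab
  · exact haR.1 ⟨b, hbA, hab⟩
  · exact haS (hS hab hbS)
  · exact A.2 haA hbA hne hab

theorem partialRow_insert (A : AntichainSub P) {S : Set P} {e : P} (heS : e ∉ S) :
    partialRow A (insert e S) = (partialRow A S \ {e}) ∪ ((RowA A).1 ∩ {e}) := by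
  ext x
  by_cases hx : x = e
  · subst hx; simp [partialRow, heS]
  · simp [partialRow, hx]

theorem not_isAntichain_insert_partialRow [WellFoundedLT P] {A : AntichainSub P} {S : Set P}
    (hS : IsLowerSet S) {e : P} (heS : e ∉ S) (hlt : ∀ a < e, a ∈ S) (heA : e ∉ A.1)
    (heR : e ∉ (RowA A).1) : ¬IsAntichain (· ≤ ·) (insert e (partialRow A S)) := by
  intro hanti
  by_cases heI : e ∈ (idealOf A).1
  · obtain ⟨y, hyA, hey⟩ := heI
    have hyS : y ∉ S := fun hy => heS (hS hey hy)
    exact hanti (Set.mem_insert _ _) (Set.mem_insert_of_mem _ (Or.inr ⟨hyA, hyS⟩))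
      (fun h => heA (h ▸ hyA)) hey
  · obtain ⟨m, hmR, hme⟩ := exists_mem_RowA_le heI
    have hmne : m ≠ e := fun h => heR (h ▸ hmR)
    have hmS : m ∈ S := hlt m (hme.lt_of_ne hmne)
    exact hanti (Set.mem_insert_of_mem _ (Or.inl ⟨hmR, hmS⟩)) (Set.mem_insert _ _) hmne hme

theorem atogFun_val_of_eq_partialRow [WellFoundedLT P] {A B : AntichainSub P} {S : Set P}
    (hS : IsLowerSet S) {e : P} (heS : e ∉ S) (hlt : ∀ a < e, a ∈ S)
    (hB : B.1 = partialRow A S) : (atogFun e B).1 = partialRow A (insert e S) := by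
  rw [partialRow_insert A heS, ← hB]
  by_cases heA : e ∈ A.1
  · have heR : e ∉ (RowA A).1 := fun h => h.1 ⟨e, heA, le_rfl⟩
    have heB : e ∈ B.1 := hB ▸ Or.inr ⟨heA, heS⟩
    simp [atogFun_val_of_mem_s7 heB, heR]
  have heB : e ∉ B.1 := by
    rw [hB]
    rintro (⟨_, h⟩ | ⟨h, _⟩)
    exacts [heS h, heA h]
  by_cases heR : e ∈ (RowA A).1
  · have hins : insert e B.1 = B.1 \ {e} ∪ ((RowA A).1 ∩ {e}) := by
      ext x; by_cases hx : x = e <;> simp [hx, heR]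
    have hanti : IsAntichain (· ≤ ·) (insert e B.1) := by
      rw [hins, hB, ← partialRow_insert A heS]
      exact isAntichain_partialRow A (hS.insert_of_forall_lt_mem hlt)
    rw [atogFun_val_of_isAntichain_insert heB hanti, hins]
  · have hblocked := not_isAntichain_insert_partialRow hS heS hlt heA heR
    rw [atogFun_of_not_isAntichain_insert (hB ▸ hblocked)]
    simp [heR, heB]

theorem listComp_reverse_map_atogFun_eq_RowA [WellFoundedLT P] {A B : AntichainSub P}
    {S : Set P} {l : List P} (hl : l.Pairwise (fun x y => ¬y ≤ x)) (hS : IsLowerSet S)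
    (hlS : ∀ x, x ∈ l ↔ x ∉ S) (hB : B.1 = partialRow A S) :
    listComp (l.reverse.map atogFun) B = RowA A := by
  induction l generalizing S B with
  | nil =>
    have hSuniv : S = Set.univ := Set.eq_univ_of_forall fun x => by simpa using hlS x
    exact Subtype.ext (by rw [← partialRow_univ, ← hSuniv, ← hB]; rfl)
  | cons e l ih =>
    obtain ⟨he, hl⟩ := List.pairwise_cons.mp hl
    have heS : e ∉ S := (hlS e).mp List.mem_cons_self
    have hlt : ∀ a < e, a ∈ S := fun a hae => by
      by_contra haS
      rcases List.mem_cons.mp ((hlS a).mpr haS) with rfl | ha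
      exacts [hae.ne rfl, he a ha hae.le]
    have hlS' : ∀ x, x ∈ l ↔ x ∉ insert e S := fun x => by
      refine ⟨fun hx => ?_, fun hx => ?_⟩
      · rintro (rfl | hxS)
        exacts [he x hx le_rfl, (hlS x).mp (List.mem_cons_of_mem e hx) hxS]
      · simp only [Set.mem_insert_iff, not_or] at hx
        exact (List.mem_cons.mp ((hlS x).mpr hx.2)).resolve_left hx.1
    rw [listComp_reverse_map_cons, Function.comp_apply]
    exact ih hl (hS.insert_of_forall_lt_mem hlt) hlS' (atogFun_val_of_eq_partialRow hS heS hlt hB)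

theorem IsLinExtListOn.pairwise_not_le {S : Set P} {l : List P} (hl : IsLinExtListOn S l) :
    l.Pairwise (fun x y => ¬y ≤ x) := by
  obtain ⟨hnd, -, hord⟩ := hl
  refine List.pairwise_iff_getElem.mpr fun i j hi hj hij hji => ?_
  rcases hji.eq_or_lt with h | h
  · exact hij.ne ((hnd.getElem_inj_iff).mp h.symm)
  · exact (hord ⟨j, hj⟩ ⟨i, hi⟩ h).not_gt hij

/-- Antichain rowmotion is the composition of all the antichain toggles,
in the reverse order of any linear extension (the toggle of the first element of the
linear extension is applied first). -/
theorem antichain_rowmotion_eq_comp_toggles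
    (P : Type*) [PartialOrder P] [Fintype P]
    (l : List P) (hl : IsLinExtListOn Set.univ l) :
    RowA (P := P) = listComp (l.reverse.map atogFun) := by
  funext A
  have hlS : ∀ x, x ∈ l ↔ x ∉ (∅ : Set P) := fun x => by simpa using hl.2.1 x
  exact (listComp_reverse_map_atogFun_eq_RowA hl.pairwise_not_le isLowerSet_empty hlS
    (partialRow_empty A).symm).symm
end

section
/- Let P be a finite graded poset and e ∈ P with rk(e) = i. Then t_e^* = τ_{rk=i−1} ∘ τ_e ∘ τ_{rk=i−1} and t_{rk=i}^* = τ_{rk=i−1} ∘ τ_{rk=i} ∘ τ_{rk=i−1}, where τ_{rk=−1} is interpreted as the identity. -/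
/-!
Toggles of incomparable elements commute, and every toggle is an involution. Elements of
equal rank are pairwise incomparable, so `τ_{rk=i-1}` is an involution and factors as the
toggles of the elements covered by `e` times the toggles of the remaining elements of rank
`i - 1`. The latter are incomparable with `e` (an element of rank `i - 1` below `e` is covered
by `e`), so they commute with everything else in `τ_{rk=i-1} τ_e τ_{rk=i-1}` and cancel,
leaving `t_e^*`. Conjugation by the involution `τ_{rk=i-1}` is a group automorphism, which turns
the statement for single elements into the statement for whole ranks.
-/

open scoped Classical

variable {P : Type*} [PartialOrder P]

theorem List.prod_mul_self_eq_one_of_pairwise_commute {M : Type*} [Monoid M] {l : List M}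
    (hc : l.Pairwise Commute) (h : ∀ x ∈ l, x * x = 1) : l.prod * l.prod = 1 := by
  induction l with
  | nil => simp
  | cons x l ih =>
    rw [List.pairwise_cons] at hc
    have hx : Commute x l.prod := Commute.list_prod_right _ _ hc.1
    rw [List.prod_cons, hx.symm.mul_mul_mul_comm, h x List.mem_cons_self, one_mul,
      ih hc.2 fun y hy => h y (List.mem_cons_of_mem _ hy)]

theorem List.prod_map_conj_of_mul_self_eq_one {G ι : Type*} [Group G] {J : G} (hJ : J * J = 1)
    (f : ι → G) (l : List ι) : (l.map fun i => J * f i * J).prod = J * (l.map f).prod * J := by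
  have hJinv : J⁻¹ = J := inv_eq_of_mul_eq_one_right hJ
  simpa [hJinv, List.map_map, Function.comp_def] using
    (map_list_prod (MulAut.conj J) (l.map f)).symm

theorem mul_mul_mul_mul_cancel_of_commute {G : Type*} [Monoid G] {c r t : G} (hrt : Commute r t)
    (hrc : Commute r c) (hrr : r * r = 1) : c * r * t * (c * r) = c * t * c := by
  calc c * r * t * (c * r) = c * t * (r * c) * r := by
        rw [mul_assoc c r t, hrt.eq]; simp only [mul_assoc]
    _ = c * t * c := by rw [hrc.eq]; simp only [mul_assoc, hrr, mul_one]

theorem listComp_map_coe {α ι : Type*} (g : ι → Equiv.Perm α) (l : List ι) :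
    listComp (l.map fun i => ⇑(g i)) = ⇑(l.map g).prod := by
  induction l with
  | nil => rfl
  | cons i l ih => simp only [listComp, List.map_cons, List.foldr_cons, List.prod_cons,
      Equiv.Perm.coe_mul] at ih ⊢; rw [ih]

theorem mem_atogFun_of_ne {a x : P} (hx : x ≠ a) (A : AntichainSub P) :
    x ∈ (atogFun a A).1 ↔ x ∈ A.1 := by
  unfold atogFun
  split_ifs <;> simp [hx]

theorem self_mem_atogFun_iff (a : P) (A : AntichainSub P) :
    a ∈ (atogFun a A).1 ↔ a ∉ A.1 ∧ IsAntichain (· ≤ ·) (insert a A.1) := by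
  unfold atogFun
  split_ifs <;> simp_all

theorem isAntichain_insert_atogFun_iff {a b : P} (hab : ¬a ≤ b) (hba : ¬b ≤ a)
    (A : AntichainSub P) :
    IsAntichain (· ≤ ·) (insert a (atogFun b A).1) ↔
      IsAntichain (· ≤ ·) (insert a A.1) := by
  simp only [isAntichain_insert, (atogFun b A).2, A.2, true_and]
  refine forall_congr' fun c => ?_
  rcases eq_or_ne c b with rfl | hcb
  · simp [hab, hba]
  · rw [mem_atogFun_of_ne hcb]

theorem atogFun_atogFun_comm {a b : P} (hab : ¬a ≤ b) (hba : ¬b ≤ a) (A : AntichainSub P) :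
    atogFun a (atogFun b A) = atogFun b (atogFun a A) := by
  have hne : a ≠ b := fun h => hab h.le
  refine Subtype.ext <| Set.ext fun x => ?_
  rcases eq_or_ne x a with rfl | hxa
  · rw [self_mem_atogFun_iff, mem_atogFun_of_ne hne, mem_atogFun_of_ne hne,
      self_mem_atogFun_iff, isAntichain_insert_atogFun_iff hab hba]
  rcases eq_or_ne x b with rfl | hxb
  · rw [self_mem_atogFun_iff, mem_atogFun_of_ne hxa, mem_atogFun_of_ne hxa,
      self_mem_atogFun_iff, isAntichain_insert_atogFun_iff hba hab]
  · simp only [mem_atogFun_of_ne hxa, mem_atogFun_of_ne hxb]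

theorem atogPerm_commute {a b : P} (hab : ¬a ≤ b) (hba : ¬b ≤ a) :
    Commute (atogPerm a) (atogPerm b) :=
  Equiv.ext (atogFun_atogFun_comm hab hba)

theorem atogPerm_mul_self (a : P) : atogPerm a * atogPerm a = 1 :=
  Equiv.ext (atogFun_involutive a)

noncomputable def atogProd (l : List P) : Equiv.Perm (AntichainSub P) := (l.map atogPerm).prod

theorem listComp_map_atogFun (l : List P) : listComp (l.map atogFun) = ⇑(atogProd l) :=
  listComp_map_coe atogPerm l

theorem atogProd_append (l l' : List P) : atogProd (l ++ l') = atogProd l * atogProd l' := by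
  simp only [atogProd, List.map_append, List.prod_append]

theorem pairwise_commute_map_atogPerm {l : List P} (hl : IsAntichain (· ≤ ·) {x | x ∈ l}) :
    (l.map atogPerm).Pairwise Commute := by
  rw [List.pairwise_map]
  refine List.pairwise_of_forall_mem_list fun a ha b hb => ?_
  rcases eq_or_ne a b with rfl | hne
  · exact Commute.refl _
  · exact atogPerm_commute (hl ha hb hne) (hl hb ha hne.symm)

theorem atogProd_mul_self {l : List P} (hl : IsAntichain (· ≤ ·) {x | x ∈ l}) :
    atogProd l * atogProd l = 1 :=
  List.prod_mul_self_eq_one_of_pairwise_commute (pairwise_commute_map_atogPerm hl) <| by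
    simpa using fun a _ => atogPerm_mul_self a

theorem atogProd_eq_of_perm {l l' : List P} (h : l.Perm l')
    (hl : IsAntichain (· ≤ ·) {x | x ∈ l}) : atogProd l = atogProd l' :=
  (h.map _).prod_eq' (pairwise_commute_map_atogPerm hl)

theorem atogProd_conj_eq_of_subset {l c : List P} {x : P} (hl : l.Nodup) (hc : c.Nodup)
    (hcl : c ⊆ l) (hanti : IsAntichain (· ≤ ·) {z | z ∈ l})
    (hx : ∀ z ∈ l, z ∉ c → ¬z ≤ x ∧ ¬x ≤ z) :
    atogProd l * atogPerm x * atogProd l = atogProd c * atogPerm x * atogProd c := by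
  set rest := l.filter fun z => !decide (z ∈ c)
  have hrest : ∀ z ∈ rest, z ∈ l ∧ z ∉ c := by simp [rest]
  have hanti_rest : IsAntichain (· ≤ ·) {z | z ∈ rest} :=
    hanti.subset fun z hz => (hrest z hz).1
  have hperm : (l.filter fun z => decide (z ∈ c)).Perm c :=
    (List.perm_ext_iff_of_nodup (hl.filter _) hc).2 fun z => by simpa using fun hz => hcl hz
  have hsplit : atogProd l = atogProd c * atogProd rest := by
    rw [atogProd_eq_of_perm (List.filter_append_perm _ l).symm hanti, atogProd_append,
      atogProd_eq_of_perm hperm (hanti.subset fun z hz => (List.mem_filter.1 hz).1)]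
  have hrest_x : Commute (atogProd rest) (atogPerm x) := by
    refine Commute.list_prod_left _ _ fun f hf => ?_
    obtain ⟨z, hz, rfl⟩ := List.mem_map.1 hf
    obtain ⟨hzx, hxz⟩ := hx z (hrest z hz).1 (hrest z hz).2
    exact atogPerm_commute hzx hxz
  have hrest_c : Commute (atogProd rest) (atogProd c) := by
    refine Commute.list_prod_left _ _ fun f hf => Commute.list_prod_right _ _ fun g hg => ?_
    obtain ⟨z, hz, rfl⟩ := List.mem_map.1 hf
    obtain ⟨w, hw, rfl⟩ := List.mem_map.1 hg
    rcases eq_or_ne z w with rfl | hne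
    · exact Commute.refl _
    · exact atogPerm_commute (hanti (hrest z hz).1 (hcl hw) hne)
        (hanti (hcl hw) (hrest z hz).1 hne.symm)
  rw [hsplit]
  exact mul_mul_mul_mul_cancel_of_commute hrest_x hrest_c (atogProd_mul_self hanti_rest)

theorem strictMono_of_covBy_add_one [Finite P] {rk : P → ℕ}
    (hrk : ∀ x y : P, x ⋖ y → rk y = rk x + 1) : StrictMono rk := by
  intro x y hxy
  induction y using WellFoundedLT.induction with
  | _ y ih =>
    obtain ⟨z, hxz, hzy⟩ := exists_le_covBy_of_lt hxy
    rw [hrk z y hzy]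
    rcases hxz.eq_or_lt with rfl | hxz
    · omega
    · have := ih z hzy.lt hxz
      omega

theorem isAntichain_of_forall_rk_eq {rk : P → ℕ} (hrk : StrictMono rk) {l : List P} {i : ℕ}
    (hl : ∀ x ∈ l, rk x = i) : IsAntichain (· ≤ ·) {x | x ∈ l} := by
  intro a ha b hb hne hab
  exact (hrk (lt_of_le_of_ne hab hne)).ne ((hl a ha).trans (hl b hb).symm)

theorem atogProd_cov_conj {rk : P → ℕ} (hrkcov : ∀ x y : P, x ⋖ y → rk y = rk x + 1)
    (hrk : StrictMono rk) {i : ℕ} {l c : List P} {x : P} (hl : l.Nodup)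
    (hlrk : ∀ z, z ∈ l ↔ rk z = i) (hc : c.Nodup) (hcx : ∀ z, z ∈ c ↔ z ⋖ x)
    (hx : rk x = i + 1) :
    atogProd c * atogPerm x * atogProd c = atogProd l * atogPerm x * atogProd l := by
  have hcl : c ⊆ l := fun z hz => (hlrk z).2 (by have := hrkcov z x ((hcx z).1 hz); omega)
  have hincomp : ∀ z ∈ l, z ∉ c → ¬z ≤ x ∧ ¬x ≤ z := by
    intro z hz hzc
    have hzi := (hlrk z).1 hz
    refine ⟨fun hzx => hzc ((hcx z).2 ⟨?_, fun w hzw hwx => ?_⟩), fun hxz => ?_⟩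
    · exact lt_of_le_of_ne hzx fun h => by subst h; omega
    · have := hrk hzw
      have := hrk hwx
      omega
    · have := hrk.monotone hxz
      omega
  exact (atogProd_conj_eq_of_subset hl hc hcl
    (isAntichain_of_forall_rk_eq hrk fun z => (hlrk z).1) hincomp).symm

theorem tStar_eq_rank_toggle_conj_general
    (P : Type*) [PartialOrder P] [Fintype P] (rk : P → ℕ)
    (hrkcov : ∀ x y : P, x ⋖ y → rk y = rk x + 1)
    (L : ℕ → List P) (hL : ∀ i, (L i).Nodup ∧ ∀ x : P, x ∈ L i ↔ rk x = i)
    (cov : P → List P)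
    (hcov : ∀ x : P, (cov x).Nodup ∧ ∀ z : P, z ∈ cov x ↔ z ⋖ x)
    (e : P) :
    (listComp ((cov e).map atogFun) ∘ atogFun e ∘ listComp ((cov e).map atogFun)
      = (if rk e = 0 then id else listComp ((L (rk e - 1)).map atogFun)) ∘ atogFun e ∘
        (if rk e = 0 then id else listComp ((L (rk e - 1)).map atogFun))) ∧
    (listComp ((L (rk e)).map fun x =>
        listComp ((cov x).map atogFun) ∘ atogFun x ∘ listComp ((cov x).map atogFun))
      = (if rk e = 0 then id else listComp ((L (rk e - 1)).map atogFun)) ∘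
          listComp ((L (rk e)).map atogFun) ∘
        (if rk e = 0 then id else listComp ((L (rk e - 1)).map atogFun))) := by
  have hrk : StrictMono rk := strictMono_of_covBy_add_one hrkcov
  set J : Equiv.Perm (AntichainSub P) := if rk e = 0 then 1 else atogProd (L (rk e - 1))
  have hJ : (if rk e = 0 then id else listComp ((L (rk e - 1)).map atogFun)) = ⇑J := by
    split_ifs <;> simp [J, *, listComp_map_atogFun]
  have hJJ : J * J = 1 := by
    by_cases h0 : rk e = 0 <;> simp only [J, h0, if_true, if_false, mul_one]
    exact atogProd_mul_self (isAntichain_of_forall_rk_eq hrk fun x => ((hL _).2 x).1)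
  have htStar : ∀ x, rk x = rk e → listComp ((cov x).map atogFun) ∘ atogFun x ∘
      listComp ((cov x).map atogFun) = ⇑(J * atogPerm x * J) := by
    intro x hx
    rw [listComp_map_atogFun]
    change ⇑(atogProd (cov x) * atogPerm x * atogProd (cov x)) = _
    by_cases h0 : rk e = 0
    · have : cov x = [] := List.eq_nil_iff_forall_not_mem.2 fun z hz => by
        have := hrkcov z x (((hcov x).2 z).1 hz); omega
      simp [J, h0, this, atogProd]
    · simp only [J, h0, if_false]
      rw [atogProd_cov_conj (i := rk e - 1) hrkcov hrk (hL _).1 (hL _).2 (hcov x).1 (hcov x).2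
        (by omega)]
  rw [hJ]
  refine ⟨htStar e rfl, ?_⟩
  rw [List.map_congr_left fun x hx => htStar x (((hL _).2 x).1 hx), listComp_map_coe,
    List.prod_map_conj_of_mul_self_eq_one hJJ, listComp_map_atogFun]
  rfl

/-- In a finite graded poset, for `e` of rank `i`:
`t_e^* = τ_{rk=i-1} ∘ τ_e ∘ τ_{rk=i-1}` and
`t_{rk=i}^* = τ_{rk=i-1} ∘ τ_{rk=i} ∘ τ_{rk=i-1}` (with `τ_{rk=-1} = id`).
Here `cov x` enumerates the elements covered by `x`,
`t_x^* = τ_{cov x} ∘ τ_x ∘ τ_{cov x}`, `L i` enumerates the elements of rank `i`,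
and `t_{rk=i}^*` is the composition of the `t_x^*` over elements `x` of rank `i`. -/
theorem tStar_eq_rank_toggle_conj
    (P : Type*) [PartialOrder P] [Fintype P] (rk : P → ℕ) (r : ℕ)
    (hrk0 : ∀ x : P, IsMin x → rk x = 0)
    (hrkcov : ∀ x y : P, x ⋖ y → rk y = rk x + 1)
    (hrkmax : ∀ x : P, IsMax x → rk x = r)
    (L : ℕ → List P) (hL : ∀ i, (L i).Nodup ∧ ∀ x : P, x ∈ L i ↔ rk x = i)
    (cov : P → List P)
    (hcov : ∀ x : P, (cov x).Nodup ∧ ∀ z : P, z ∈ cov x ↔ z ⋖ x)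
    (e : P) :
    (listComp ((cov e).map atogFun) ∘ atogFun e ∘ listComp ((cov e).map atogFun)
      = (if rk e = 0 then id else listComp ((L (rk e - 1)).map atogFun)) ∘ atogFun e ∘
        (if rk e = 0 then id else listComp ((L (rk e - 1)).map atogFun))) ∧
    (listComp ((L (rk e)).map fun x =>
        listComp ((cov x).map atogFun) ∘ atogFun x ∘ listComp ((cov x).map atogFun))
      = (if rk e = 0 then id else listComp ((L (rk e - 1)).map atogFun)) ∘
          listComp ((L (rk e)).map atogFun) ∘
        (if rk e = 0 then id else listComp ((L (rk e - 1)).map atogFun))) :=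
  tStar_eq_rank_toggle_conj_general P rk hrkcov L hL cov hcov e
end
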